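/- arXiv:2306.00364 — 7 statements merged into one kernel-verified Lean document; each statement's English description precedes it below -/
import Mathlib

section
/- Let f : M → N be a surjective homomorphism of commutative monoids. If the canonical map M^♭ → M/M^× is surjective, then the canonical map N^♭ → N/N^× is surjective. -/
/-- The tilt `M^♭ = lim_{x ↦ x^p} M` of a commutative monoid `M`. -/
def tilt (p : ℕ) (M : Type*) [CommMonoid M] : Submonoid (ℕ → M) where
  carrier := {f | ∀ n, f (n + 1) ^ p = f n}
  one_mem' := fun n => by simp
  mul_mem' := by
    intro a b ha hb n
    simp only [Pi.mul_apply, mul_pow]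
    rw [ha n, hb n]

/-- The congruence on a commutative monoid identifying `a` and `b` whenever they differ
by a unit; its quotient is `M/M^×`. -/
def unitsCon (M : Type*) [CommMonoid M] : Con M where
  r a b := ∃ u : Mˣ, a = b * u
  iseqv := by
    refine ⟨fun a => ⟨1, by simp⟩, ?_, ?_⟩
    · rintro a b ⟨u, rfl⟩
      exact ⟨u⁻¹, by simp⟩
    · rintro a b c ⟨u, rfl⟩ ⟨v, rfl⟩
      exact ⟨v * u, by simp [mul_assoc]⟩
  mul' := by
    intro a b c d h1 h2
    obtain ⟨u, rfl⟩ := h1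
    obtain ⟨v, rfl⟩ := h2
    exact ⟨u * v, by rw [Units.val_mul]; exact mul_mul_mul_comm b (u : M) d (v : M)⟩

/-- If `f : M → N` is a surjective homomorphism of commutative monoids and the canonical
map `M^♭ → M/M^×` is surjective, then the canonical map `N^♭ → N/N^×` is surjective. -/
theorem stmt1 (p : ℕ) (hp : p.Prime) (M N : Type*) [CommMonoid M] [CommMonoid N]
    (f : M →* N) (hf : Function.Surjective f)
    (hM : Function.Surjective
      (fun x : ↥(tilt p M) => (unitsCon M).mk' ((x : ℕ → M) 0))) :
    Function.Surjective
      (fun x : ↥(tilt p N) => (unitsCon N).mk' ((x : ℕ → N) 0)) := by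
  intro y
  obtain ⟨n, rfl⟩ := Con.mk'_surjective y
  obtain ⟨m, rfl⟩ := hf n
  obtain ⟨x, hx⟩ := hM ((unitsCon M).mk' m)
  have hrel : (unitsCon M) ((x : ℕ → M) 0) m := (Con.eq _).mp hx
  obtain ⟨u, hu⟩ := hrel
  refine ⟨⟨fun k => f ((x : ℕ → M) k), fun k => ?_⟩, ?_⟩
  · rw [← map_pow, x.2 k]
  · exact (Con.eq _).mpr ⟨Units.map f u, by show f ((x : ℕ → M) 0) = _; rw [hu]; simp⟩
end

section
/- Let M be a cancellative (integral) commutative monoid such that the quotient M/M^× is uniquely p-divisible. Then the canonical map M^♭/(M^♭)^× → M/M^× is injective. -/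
/-- Let `M` be a cancellative (integral) commutative monoid such that `M/M^×` is uniquely
`p`-divisible. Then the canonical map `M^♭/(M^♭)^× → M/M^×` (induced by
`(m_0, m_1, ...) ↦ m_0`) is injective. -/
theorem stmt2 (p : ℕ) (hp : p.Prime) (M : Type*) [CancelCommMonoid M]
    (hdiv : Function.Bijective (fun q : (unitsCon M).Quotient => q ^ p)) :
    ∀ x y : ↥(tilt p M),
      (unitsCon M).mk' ((x : ℕ → M) 0) = (unitsCon M).mk' ((y : ℕ → M) 0) →
      (unitsCon ↥(tilt p M)).mk' x = (unitsCon ↥(tilt p M)).mk' y := by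

  intro x y h
  -- Every level agrees in M/M^×
  have key : ∀ n, ∃ u : Mˣ, (x : ℕ → M) n = (y : ℕ → M) n * u := by
    intro n
    induction n with
    | zero => exact (Con.eq _).mp h
    | succ n ih =>
      have hx := x.2 n
      have hy := y.2 n
      have : ((unitsCon M).mk' ((x : ℕ → M) (n+1))) ^ p
          = ((unitsCon M).mk' ((y : ℕ → M) (n+1))) ^ p := by
        rw [← map_pow, ← map_pow, hx, hy]
        exact (Con.eq _).mpr ih
      exact (Con.eq _).mp (hdiv.1 this)
  choose u hu using key
  -- compatibility: u (n+1) ^ p = u n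
  have hcomp : ∀ n, u (n + 1) ^ p = u n := by
    intro n
    have hx := x.2 n
    have : (y : ℕ → M) n * (u n : M) = (y : ℕ → M) n * ((u (n+1)) ^ p : Mˣ) := by
      rw [← hu n, ← hx, hu (n+1), mul_pow, ← y.2 n, Units.val_pow_eq_pow_val]
    exact (Units.ext (mul_left_cancel this)).symm
  -- build the unit of the tilt
  refine (Con.eq _).mpr ⟨⟨⟨fun n => (u n : M), fun n => by
      rw [← Units.val_pow_eq_pow_val, hcomp n]⟩,
    ⟨fun n => ((u n)⁻¹ : Mˣ), fun n => by
      rw [← Units.val_pow_eq_pow_val, inv_pow, hcomp n]⟩, ?_, ?_⟩, ?_⟩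
  · ext n; exact u n |>.mul_inv
  · ext n; exact u n |>.inv_mul
  · ext n; exact hu n
end

section
/- Let h : M → P be an exact surjective homomorphism of integral commutative monoids, where P is fine (finitely generated and integral), sharp, and saturated. Then h admits a section: there is a monoid homomorphism s : P → M with h ∘ s = id_P. -/
/-- Let `h : M → P` be an exact surjective homomorphism of integral commutative monoids,
where `P` is fine (finitely generated and integral), sharp, and saturated. Then `h`
admits a section. Here `M` and `P` are realized as submonoids of their group completions
(ambient abelian groups `G` and `H` generated by differences), `h` is the restriction of
the induced group homomorphism `φ : G → H`, exactness means `M = φ⁻¹(P)`, and the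
section is a monoid homomorphism `s : P → M` with `h ∘ s = id`. -/
theorem stmt8 (G H : Type*) [AddCommGroup G] [AddCommGroup H]
    (M : AddSubmonoid G) (P : AddSubmonoid H)
    (hgenG : ∀ g : G, ∃ a ∈ M, ∃ b ∈ M, g = a - b)
    (hgenH : ∀ x : H, ∃ a ∈ P, ∃ b ∈ P, x = a - b)
    (φ : G →+ H)
    (hmap : ∀ m ∈ M, φ m ∈ P)
    (hsurj : ∀ q ∈ P, ∃ m ∈ M, φ m = q)
    (hexact : ∀ g : G, φ g ∈ P → g ∈ M)
    (hfg : P.FG)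
    (hsharp : ∀ x ∈ P, -x ∈ P → x = 0)
    (hsat : ∀ x : H, ∀ n : ℕ, 1 ≤ n → n • x ∈ P → x ∈ P) :
    ∃ s : ↥P →+ ↥M, ∀ q : ↥P, φ ((s q : G)) = (q : H) := by
  -- H is a finitely generated ℤ-module
  obtain ⟨S, hS⟩ := hfg
  have hPle : ∀ x ∈ P, x ∈ AddSubgroup.closure (S : Set H) := by
    intro x hx
    rw [← hS] at hx
    have : AddSubmonoid.closure (S : Set H) ≤ (AddSubgroup.closure (S : Set H)).toAddSubmonoid :=
      AddSubmonoid.closure_le.2 AddSubgroup.subset_closure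
    exact this hx
  have hfgH : AddGroup.FG H := by
    refine ⟨⟨S, ?_⟩⟩
    rw [eq_top_iff]
    intro x _
    obtain ⟨a, ha, b, hb, rfl⟩ := hgenH x
    exact sub_mem (hPle a ha) (hPle b hb)
  have : Module.Finite ℤ H := Module.Finite.iff_addGroup_fg.2 hfgH
  -- H is torsion-free
  have : NoZeroSMulDivisors ℤ H := by
    refine ⟨fun {n x} h => ?_⟩
    by_cases hn : n = 0
    · exact Or.inl hn
    · right
      have h1 : 1 ≤ n.natAbs := Nat.one_le_iff_ne_zero.2 (Int.natAbs_ne_zero.2 hn)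
      have hx0 : n.natAbs • x = 0 := by
        rw [← natCast_zsmul]
        rcases Int.natAbs_eq n with he | he
        · rw [← he, h]
        · rw [show ((n.natAbs : ℤ)) = -n from by omega, neg_zsmul, h, neg_zero]
      have hxP : x ∈ P := hsat x n.natAbs h1 (by rw [hx0]; exact P.zero_mem)
      have hxnP : -x ∈ P := by
        apply hsat (-x) n.natAbs h1
        rw [smul_neg, hx0, neg_zero]; exact P.zero_mem
      exact hsharp x hxP hxnP
  -- φ is surjective as a group hom
  have hφsurj : Function.Surjective φ.toIntLinearMap := by
    intro y
    obtain ⟨a, ha, b, hb, rfl⟩ := hgenH y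
    obtain ⟨m, hm, hma⟩ := hsurj a ha
    obtain ⟨m', hm', hmb⟩ := hsurj b hb
    exact ⟨m - m', by simp [hma, hmb]⟩
  -- H is free, hence projective, so the surjection splits
  obtain ⟨ψ, hψ⟩ := Module.projective_lifting_property φ.toIntLinearMap
    (LinearMap.id : H →ₗ[ℤ] H) hφsurj
  have hψ' : ∀ y : H, φ (ψ y) = y := fun y => LinearMap.congr_fun hψ y
  refine ⟨⟨⟨fun q => ⟨ψ q, hexact _ (by rw [hψ']; exact q.2)⟩, ?_⟩, ?_⟩, ?_⟩
  · ext; simp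
  · intro a b; ext; simp
  · intro q; exact hψ' q
end

section
/- Let h : M → N be a surjective homomorphism of integral commutative monoids and let M̃ := (h^gp)^{-1}(N) ⊆ M^gp be its exactification. Then: (1) the induced map h̃ : M̃ → N is surjective and exact; (2) the saturation of M̃ equals (h^gp)^{-1}(N^sat), and consequently the induced map M̃^sat → N^sat is surjective and exact. -/
/-- The saturation `M^sat = { x ∈ M^gp | n • x ∈ M for some n ≥ 1 }` of a submonoid `M`
of an abelian group (thought of as the group completion of `M`). -/
def msat {G : Type*} [AddCommGroup G] (M : AddSubmonoid G) : AddSubmonoid G where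
  carrier := {x : G | ∃ n : ℕ, 1 ≤ n ∧ n • x ∈ M}
  zero_mem' := ⟨1, le_rfl, by simpa using M.zero_mem⟩
  add_mem' := by
    rintro a b ⟨n, hn, ha⟩ ⟨m, hm, hb⟩
    refine ⟨n * m, Nat.one_le_iff_ne_zero.mpr (Nat.mul_ne_zero (by omega) (by omega)), ?_⟩
    have h : (n * m) • (a + b) = m • (n • a) + n • (m • b) := by
      rw [smul_add]
      congr 1
      · rw [mul_comm, mul_smul]
      · rw [mul_smul]
    rw [h]
    exact M.add_mem (nsmul_mem ha m) (nsmul_mem hb n)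

/-- Let `h : M → N` be a surjective homomorphism of integral commutative monoids (with
group completions realized as ambient abelian groups `G`, `H` generated by differences,
and `h` the restriction of the group homomorphism `φ : G → H`), and let
`M̃ = (h^gp)⁻¹(N) = N.comap φ` be the exactification. Then: (1) the induced map
`h̃ : M̃ → N` is surjective and exact; (2) the saturation of `M̃` equals
`(h^gp)⁻¹(N^sat)`, and consequently the induced map `M̃^sat → N^sat` is surjective
and exact. -/
theorem stmt10 (G H : Type*) [AddCommGroup G] [AddCommGroup H]
    (M : AddSubmonoid G) (N : AddSubmonoid H)
    (hgenG : ∀ g : G, ∃ a ∈ M, ∃ b ∈ M, g = a - b)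
    (hgenH : ∀ x : H, ∃ a ∈ N, ∃ b ∈ N, x = a - b)
    (φ : G →+ H)
    (hmap : ∀ m ∈ M, φ m ∈ N)
    (hsurj : ∀ y ∈ N, ∃ m ∈ M, φ m = y) :
    (∀ y ∈ N, ∃ g ∈ N.comap φ, φ g = y) ∧
    (∀ g : G, φ g ∈ N → g ∈ N.comap φ) ∧
    (msat (N.comap φ) = (msat N).comap φ) ∧
    (∀ y ∈ msat N, ∃ x ∈ msat (N.comap φ), φ x = y) ∧
    (∀ g : G, φ g ∈ msat N → g ∈ msat (N.comap φ)) := by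
  have key : msat (N.comap φ) = (msat N).comap φ := by
    ext x
    constructor
    · rintro ⟨n, hn, hx⟩
      exact ⟨n, hn, by simpa using hx⟩
    · rintro ⟨n, hn, hx⟩
      exact ⟨n, hn, by simpa using hx⟩
  refine ⟨?_, fun g hg => hg, key, ?_, ?_⟩
  · intro y hy
    obtain ⟨m, hm, hφm⟩ := hsurj y hy
    exact ⟨m, by simpa [AddSubmonoid.mem_comap, hφm] using hy, hφm⟩
  · intro y hy
    obtain ⟨a, ha, b, hb, rfl⟩ := hgenH y
    obtain ⟨ma, hma, rfl⟩ := hsurj a ha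
    obtain ⟨mb, hmb, rfl⟩ := hsurj b hb
    refine ⟨ma - mb, ?_, by simp⟩
    rw [key]
    simpa using hy
  · intro g hg
    rw [key]
    exact hg
end

section
/- Fix an integer n ≥ 1, and let (1/n)ℕ ⊆ ℚ denote the monoid of nonnegative multiples of 1/n. Let Q be the pushout (amalgamated sum) (1/n)ℕ ⊕_ℕ (1/n)ℕ in the category of commutative monoids along the two inclusions ℕ ↪ (1/n)ℕ, so that Q^gp ≅ ((1/n)ℤ ⊕ (1/n)ℤ)/⟨(1,-1)⟩. Then the saturation of the integral quotient of Q, computed inside Q^gp, is isomorphic as a monoid to (ℤ/nℤ) × (1/n)ℕ, via (a, b) ↦ (class of n·a mod n, a + b). -/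
/-- Fix `n ≥ 1`. Let `Q` be the image, inside `(ℤ/nℤ) × ℚ ⊇ (ℤ/nℤ) × (1/n)ℤ ≅ Q^gp`,
of the pushout `(1/n)ℕ ⊕_ℕ (1/n)ℕ` under the identification `(a, b) ↦ (n·a mod n, a+b)`,
i.e. the submonoid generated by `{(k mod n, k/n) : k ∈ ℕ}` (the first copy) and
`{(0, k/n) : k ∈ ℕ}` (the second copy). Then the saturation of `Q`, computed inside
`Q^gp` (the subgroup generated by `Q`), is exactly `(ℤ/nℤ) × (1/n)ℕ`, i.e. the set of
elements whose second coordinate is a nonnegative multiple of `1/n`. -/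
theorem stmt11 (n : ℕ) (hn : 1 ≤ n)
    (Q : AddSubmonoid (ZMod n × ℚ))
    (hQ : Q = AddSubmonoid.closure
      ({x : ZMod n × ℚ | ∃ k : ℕ, x = ((k : ZMod n), (k : ℚ) / (n : ℚ))} ∪
       {x : ZMod n × ℚ | ∃ k : ℕ, x = ((0 : ZMod n), (k : ℚ) / (n : ℚ))})) :
    {x : ZMod n × ℚ | x ∈ AddSubgroup.closure (Q : Set (ZMod n × ℚ)) ∧
        ∃ m : ℕ, 1 ≤ m ∧ m • x ∈ Q} =
    {x : ZMod n × ℚ | ∃ k : ℕ, x.2 = (k : ℚ) / (n : ℚ)} := by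
  haveI : NeZero n := ⟨by omega⟩
  have hn0 : (0 : ℚ) < n := by exact_mod_cast Nat.pos_of_ne_zero (by omega)
  have hgen1 : ∀ k : ℕ, ((k : ZMod n), (k : ℚ) / n) ∈ Q := fun k => by
    rw [hQ]; exact AddSubmonoid.subset_closure (Or.inl ⟨k, rfl⟩)
  have hgen2 : ∀ k : ℕ, ((0 : ZMod n), (k : ℚ) / n) ∈ Q := fun k => by
    rw [hQ]; exact AddSubmonoid.subset_closure (Or.inr ⟨k, rfl⟩)
  -- every element of Q has nonnegative second coordinate
  have hpos : ∀ x ∈ Q, 0 ≤ x.2 := by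
    let P : AddSubmonoid (ZMod n × ℚ) :=
      { carrier := {x | 0 ≤ x.2}
        zero_mem' := by simp [Set.mem_setOf_eq]
        add_mem' := fun {a b} ha hb => by
          simp only [Set.mem_setOf_eq, Prod.snd_add] at *
          exact add_nonneg ha hb }
    have hle : Q ≤ P := by
      rw [hQ, AddSubmonoid.closure_le]
      rintro x (⟨k, rfl⟩ | ⟨k, rfl⟩) <;>
        exact div_nonneg (Nat.cast_nonneg _) hn0.le
    exact fun x hx => hle hx
  -- every element of the subgroup closure has second coord in (1/n)ℤ
  have hsub : ∀ x ∈ AddSubgroup.closure (Q : Set (ZMod n × ℚ)),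
      ∃ m : ℤ, x.2 = (m : ℚ) / n := by
    have hle : AddSubgroup.closure (Q : Set (ZMod n × ℚ)) ≤
        (AddSubgroup.zmultiples ((n : ℚ)⁻¹)).comap (AddMonoidHom.snd (ZMod n) ℚ) := by
      rw [AddSubgroup.closure_le]
      intro x hx
      rw [hQ] at hx
      have hle2 : AddSubmonoid.closure
          ({x : ZMod n × ℚ | ∃ k : ℕ, x = ((k : ZMod n), (k : ℚ) / (n : ℚ))} ∪
           {x : ZMod n × ℚ | ∃ k : ℕ, x = ((0 : ZMod n), (k : ℚ) / (n : ℚ))}) ≤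
          ((AddSubgroup.zmultiples ((n : ℚ)⁻¹)).comap
            (AddMonoidHom.snd (ZMod n) ℚ)).toAddSubmonoid := by
        rw [AddSubmonoid.closure_le]
        rintro x (⟨k, rfl⟩ | ⟨k, rfl⟩) <;>
          · refine AddSubgroup.mem_comap.mpr (AddSubgroup.mem_zmultiples_iff.mpr ⟨k, ?_⟩)
            show (k : ℤ) • ((n : ℚ))⁻¹ = (k : ℚ) / n
            rw [zsmul_eq_mul]; push_cast; ring
      exact hle2 hx
    intro x hx
    obtain ⟨m, hm⟩ := AddSubgroup.mem_zmultiples_iff.mp (hle hx)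
    have hm' : m • ((n : ℚ))⁻¹ = x.2 := hm
    exact ⟨m, by rw [← hm', zsmul_eq_mul, div_eq_mul_inv]⟩
  ext x
  simp only [Set.mem_setOf_eq]
  constructor
  · rintro ⟨hx, m, hm1, hmx⟩
    obtain ⟨j, hj⟩ := hsub x hx
    have h2 : 0 ≤ (m • x).2 := hpos _ hmx
    have hx2 : 0 ≤ x.2 := by
      have h2' : 0 ≤ (m : ℚ) * x.2 := by
        have : (m • x).2 = m • x.2 := rfl
        rwa [this, nsmul_eq_mul] at h2
      have hmq : (0 : ℚ) < m := by exact_mod_cast Nat.pos_of_ne_zero (by omega)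
      have hrw : x.2 = ((m : ℚ) * x.2) / m := by field_simp
      rw [hrw]
      exact div_nonneg h2' hmq.le
    have hjq : (0 : ℚ) ≤ (j : ℚ) := by
      have h := mul_nonneg hx2 hn0.le
      rwa [hj, div_mul_cancel₀ _ hn0.ne'] at h
    have hj0 : 0 ≤ j := by exact_mod_cast hjq
    refine ⟨j.toNat, ?_⟩
    rw [hj]
    congr 1
    exact_mod_cast (Int.toNat_of_nonneg hj0).symm
  · rintro ⟨k, hk⟩
    set v : ℕ := x.1.val with hv
    have hxeq : x = ((v : ZMod n), (v : ℚ) / n) +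
        ((0 : ZMod n), (k : ℚ) / n) + -((0 : ZMod n), (v : ℚ) / n) := by
      ext
      · show x.1 = (v : ZMod n) + 0 + -(0 : ZMod n)
        simp [hv, ZMod.natCast_val, ZMod.cast_id]
      · show x.2 = (v : ℚ) / n + (k : ℚ) / n + -((v : ℚ) / n)
        rw [hk]; ring
    constructor
    · rw [hxeq]
      exact add_mem (add_mem (AddSubgroup.subset_closure (hgen1 v))
        (AddSubgroup.subset_closure (hgen2 k)))
        (neg_mem (AddSubgroup.subset_closure (hgen2 v)))
    · refine ⟨n, hn, ?_⟩
      have heq : n • x = ((0 : ZMod n), ((k * n : ℕ) : ℚ) / n) := by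
        ext
        · show n • x.1 = 0
          rw [nsmul_eq_mul]
          simp [ZMod.natCast_self]
        · show n • x.2 = ((k * n : ℕ) : ℚ) / n
          rw [hk, nsmul_eq_mul]
          push_cast
          field_simp
      rw [heq]
      exact hgen2 _
end

section
/- Let M be an integral commutative monoid (written multiplicatively) and φ : M → M an isomorphism of monoids such that for every m ∈ M there is a unit u ∈ M^× with φ(m) = m^p · u. Then M is p-saturated: for every x in the group completion M^gp, if x^p ∈ M (i.e. x^p lies in the image of M), then x ∈ M. -/
/-- Let `M` be an integral commutative monoid (realized as a submonoid of its group
completion, an ambient abelian group `G` generated by quotients of elements of `M`) and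
`φ : M → M` an isomorphism of monoids such that for every `m ∈ M` there is a unit `u` of
`M` with `φ(m) = m^p · u`. Then `M` is `p`-saturated: for every `x ∈ M^gp`, if
`x^p ∈ M` then `x ∈ M`. -/
theorem stmt13 (p : ℕ) (hp : p.Prime) (G : Type*) [CommGroup G] (M : Submonoid G)
    (hgen : ∀ g : G, ∃ a ∈ M, ∃ b ∈ M, g = a * b⁻¹)
    (φ : ↥M ≃* ↥M)
    (hφ : ∀ m : ↥M, ∃ u : (↥M)ˣ, φ m = m ^ p * u) :
    ∀ x : G, x ^ p ∈ M → x ∈ M := by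
  intro x hc
  obtain ⟨a, ha, b, hb, hx⟩ := hgen x
  set A : M := ⟨a, ha⟩ with hA
  set B : M := ⟨b, hb⟩ with hB
  obtain ⟨u, hu⟩ := hφ A
  obtain ⟨v, hv⟩ := hφ B
  set c : M := ⟨x ^ p, hc⟩ with hcdef
  have key : φ A = c * φ B * ((v⁻¹ * u : (↥M)ˣ) : ↥M) := by
    apply Subtype.ext
    have h1 : ((φ A : ↥M) : G) = a ^ p * ((u : ↥M) : G) := by
      rw [hu]; push_cast [hA]; ring_nf
    have h2 : ((φ B : ↥M) : G) = b ^ p * ((v : ↥M) : G) := by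
      rw [hv]; push_cast [hB]; ring_nf
    have hvu : (((v : ↥M) : G)) * (((v⁻¹ * u : (↥M)ˣ) : ↥M) : G) = ((u : ↥M) : G) := by
      rw [← Submonoid.coe_mul]
      congr 1
      rw [← Units.val_mul, mul_inv_cancel_left]
    have hab : x ^ p * b ^ p = a ^ p := by
      rw [hx, mul_pow, inv_pow, inv_mul_cancel_right]
    rw [Submonoid.coe_mul, Submonoid.coe_mul, h1, h2]
    show a ^ p * ((u : ↥M) : G) = x ^ p * (b ^ p * ((v : ↥M) : G)) * (((v⁻¹ * u : (↥M)ˣ) : ↥M) : G)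
    have h3 : x ^ p * (b ^ p * ((v : ↥M) : G)) * (((v⁻¹ * u : (↥M)ˣ) : ↥M) : G)
        = (x ^ p * b ^ p) * (((v : ↥M) : G) * (((v⁻¹ * u : (↥M)ˣ) : ↥M) : G)) := by
      simp [mul_assoc, mul_comm, mul_left_comm]
    rw [h3, hvu, hab]
  have key2 : A = φ.symm c * B * φ.symm ((v⁻¹ * u : (↥M)ˣ) : ↥M) := by
    apply φ.injective
    simp [key]
  have hab2 : a = ((φ.symm c : ↥M) : G) * b * ((φ.symm ((v⁻¹ * u : (↥M)ˣ) : ↥M) : ↥M) : G) := by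
    have := congrArg (fun m : ↥M => (m : G)) key2
    simpa using this
  have hxeq : x = ((φ.symm c : ↥M) : G) * ((φ.symm ((v⁻¹ * u : (↥M)ˣ) : ↥M) : ↥M) : G) := by
    rw [hx, hab2, mul_right_comm, mul_inv_cancel_right]
  rw [hxeq]
  exact mul_mem (φ.symm c).2 (φ.symm _).2
end

section
/- Let P be a fine, sharp, saturated commutative monoid and M a saturated integral commutative monoid (written additively) that is divisible and such that M/M^× is uniquely divisible. Then for every monoid homomorphism f : P → M and every integer n ≥ 1, there exists a monoid homomorphism g : P → M with n·g(x) = f(x) for all x ∈ P. -/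
/-- Let `P` be a fine, sharp, saturated commutative monoid and `M` a saturated integral
commutative monoid that is divisible and such that `M/M^×` is uniquely divisible
(multiplication by every `k ≥ 1` on `M/M^×` is bijective, spelled out via
representatives: surjectivity and injectivity modulo units of `M`). Both monoids are
realized inside their group completions (ambient abelian groups generated by
differences). Then for every monoid homomorphism `f : P → M` and every `n ≥ 1`, there
exists a monoid homomorphism `g : P → M` with `n • g(x) = f(x)` for all `x ∈ P`. -/
theorem stmt14 (Gp Gm : Type*) [AddCommGroup Gp] [AddCommGroup Gm]
    (P : AddSubmonoid Gp) (M : AddSubmonoid Gm)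
    (hgenP : ∀ g : Gp, ∃ a ∈ P, ∃ b ∈ P, g = a - b)
    (hPfg : P.FG)
    (hPsharp : ∀ x ∈ P, -x ∈ P → x = 0)
    (hPsat : ∀ x : Gp, ∀ n : ℕ, 1 ≤ n → n • x ∈ P → x ∈ P)
    (hgenM : ∀ g : Gm, ∃ a ∈ M, ∃ b ∈ M, g = a - b)
    (hMsat : ∀ x : Gm, ∀ n : ℕ, 1 ≤ n → n • x ∈ M → x ∈ M)
    (hMdiv : ∀ m ∈ M, ∀ k : ℕ, 1 ≤ k → ∃ m' ∈ M, k • m' = m)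
    (hMuniqSurj : ∀ k : ℕ, 1 ≤ k → ∀ m ∈ M,
      ∃ r ∈ M, ∃ u, u ∈ M ∧ -u ∈ M ∧ k • r = m + u)
    (hMuniqInj : ∀ k : ℕ, 1 ≤ k → ∀ r ∈ M, ∀ s ∈ M,
      (∃ u, u ∈ M ∧ -u ∈ M ∧ k • r = k • s + u) →
      ∃ v, v ∈ M ∧ -v ∈ M ∧ r = s + v)
    (f : ↥P →+ ↥M) (n : ℕ) (hn : 1 ≤ n) :
    ∃ g : ↥P →+ ↥M, ∀ x : ↥P, n • g x = f x := by
  classical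
  -- Well-definedness of the extension of `f` to the group completion.
  have wd : ∀ (a b a' b' : Gp) (ha : a ∈ P) (hb : b ∈ P) (ha' : a' ∈ P) (hb' : b' ∈ P),
      a - b = a' - b' →
      ((f ⟨a, ha⟩ : ↥M) : Gm) - ((f ⟨b, hb⟩ : ↥M) : Gm)
        = ((f ⟨a', ha'⟩ : ↥M) : Gm) - ((f ⟨b', hb'⟩ : ↥M) : Gm) := by
    intro a b a' b' ha hb ha' hb' h
    have hsum : a + b' = a' + b := sub_eq_sub_iff_add_eq_add.mp h
    have hsub : (⟨a, ha⟩ : ↥P) + ⟨b', hb'⟩ = ⟨a', ha'⟩ + ⟨b, hb⟩ := by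
      apply Subtype.ext; simpa using hsum
    have := congrArg (fun z => ((f z : ↥M) : Gm)) hsub
    simp only [map_add, AddSubmonoid.coe_add] at this
    exact sub_eq_sub_iff_add_eq_add.mpr this
  have hgenP' := hgenP
  -- Choose decompositions for every element of `Gp`.
  choose pa hpa pb hpb hpab using hgenP'
  set F0 : Gp → Gm := fun g =>
    ((f ⟨pa g, hpa g⟩ : ↥M) : Gm) - ((f ⟨pb g, hpb g⟩ : ↥M) : Gm) with hF0
  have hF0add : ∀ x y : Gp, F0 (x + y) = F0 x + F0 y := by
    intro x y
    have h1 : F0 (x + y)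
        = ((f ⟨pa x + pa y, add_mem (hpa x) (hpa y)⟩ : ↥M) : Gm)
          - ((f ⟨pb x + pb y, add_mem (hpb x) (hpb y)⟩ : ↥M) : Gm) := by
      apply wd
      conv_lhs => rw [← hpab (x + y)]
      conv_lhs => rw [hpab x]
      conv_lhs => rw [hpab y]
      abel
    have h2 : (⟨pa x + pa y, add_mem (hpa x) (hpa y)⟩ : ↥P)
        = ⟨pa x, hpa x⟩ + ⟨pa y, hpa y⟩ := rfl
    have h3 : (⟨pb x + pb y, add_mem (hpb x) (hpb y)⟩ : ↥P)
        = ⟨pb x, hpb x⟩ + ⟨pb y, hpb y⟩ := rfl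
    rw [h1, h2, h3, map_add, map_add]
    push_cast
    simp only [hF0]
    abel
  set F : Gp →+ Gm := AddMonoidHom.mk' F0 hF0add with hF
  have hFP : ∀ (a : Gp) (ha : a ∈ P), F a = ((f ⟨a, ha⟩ : ↥M) : Gm) := by
    intro a ha
    have : F0 a = ((f ⟨a, ha⟩ : ↥M) : Gm) - ((f ⟨0, P.zero_mem⟩ : ↥M) : Gm) := by
      apply wd
      rw [← hpab a]; simp
    have h0 : (⟨(0 : Gp), P.zero_mem⟩ : ↥P) = 0 := rfl
    rw [hF]
    simp only [AddMonoidHom.mk'_apply, this, h0, map_zero]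
    simp
  -- `Gp` is a finitely generated, torsion-free abelian group, hence free.
  haveI : AddGroup.FG Gp := by
    rw [AddGroup.fg_def]
    obtain ⟨S, hS⟩ := hPfg
    refine ⟨S, ?_⟩
    rw [eq_top_iff]
    intro g _
    obtain ⟨a, ha, b, hb, rfl⟩ := hgenP g
    have hle : P ≤ (AddSubgroup.closure (S : Set Gp)).toAddSubmonoid := by
      rw [← hS, AddSubmonoid.closure_le]
      exact AddSubgroup.subset_closure
    exact sub_mem (hle ha) (hle hb)
  haveI : Module.Finite ℤ Gp := Module.Finite.iff_addGroup_fg.2 ‹_›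
  haveI : NoZeroSMulDivisors ℤ Gp := by
    refine ⟨fun {c x} hcx => ?_⟩
    by_cases hc : c = 0
    · exact Or.inl hc
    · right
      have hk : 1 ≤ c.natAbs := Nat.one_le_iff_ne_zero.2 (Int.natAbs_ne_zero.2 hc)
      have hx : c.natAbs • x = 0 := by
        have hz : (c.natAbs : ℤ) • x = 0 := by
          rcases Int.natAbs_eq c with h | h
          · rw [← h, hcx]
          · rw [show ((c.natAbs : ℤ)) = -c by omega, neg_smul, hcx, neg_zero]
        simpa [natCast_zsmul] using hz
      have h1 : x ∈ P := hPsat x c.natAbs hk (by rw [hx]; exact P.zero_mem)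
      have h2 : -x ∈ P := by
        refine hPsat (-x) c.natAbs hk ?_
        rw [smul_neg, hx, neg_zero]; exact P.zero_mem
      exact hPsharp x h1 h2
  haveI : Module.Free ℤ Gp := Module.free_of_finite_type_torsion_free'
  set B := Module.Free.chooseBasis ℤ Gp with hB
  -- `Gm` is divisible.
  have hdivG : ∀ g : Gm, ∃ y : Gm, n • y = g := by
    intro g
    obtain ⟨a, ha, b, hb, rfl⟩ := hgenM g
    obtain ⟨a', _, ha'⟩ := hMdiv a ha n hn
    obtain ⟨b', _, hb'⟩ := hMdiv b hb n hn
    exact ⟨a' - b', by rw [smul_sub, ha', hb']⟩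
  choose y hy using hdivG
  set G : Gp →ₗ[ℤ] Gm := B.constr ℤ (fun i => y (F (B i))) with hG
  have hnG : ∀ x : Gp, n • G x = F x := by
    have hext : (n : ℤ) • G = F.toIntLinearMap := by
      apply B.ext
      intro i
      simp only [LinearMap.smul_apply, hG, Module.Basis.constr_basis]
      rw [natCast_zsmul, hy]
      rfl
    intro x
    have := congrArg (fun L : Gp →ₗ[ℤ] Gm => L x) hext
    simp only [LinearMap.smul_apply] at this
    rw [← natCast_zsmul]
    exact this
  -- Values of `G` on `P` land in `M` by saturatedness.
  have hmem : ∀ x : ↥P, G (x : Gp) ∈ M := by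
    intro x
    refine hMsat _ n hn ?_
    rw [hnG, hFP (x : Gp) x.2]
    simpa using (f ⟨(x : Gp), x.2⟩).2
  refine ⟨{ toFun := fun x => ⟨G (x : Gp), hmem x⟩,
            map_zero' := by apply Subtype.ext; simp
            map_add' := by intro x y; apply Subtype.ext; simp }, ?_⟩
  intro x
  apply Subtype.ext
  show n • (G (x : Gp)) = ((f x : ↥M) : Gm)
  rw [hnG, hFP (x : Gp) x.2]
end
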